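/- Let Z be an accessible FSM and let A_1, …, A_n (n ≥ 1) be thin modules of Z forming an overlapping collection, with H = A_1 ∪ … ∪ A_n. Then H is a thin module of Z, there is exactly one node α ∈ H such that α is the start node of every A_i that contains α, and this node α is the start node of H. -/

import Mathlib

open Classical

universe u v

variable {Q : Type u} {E : Type v}

/-- `u` is an entrance of `M`: `u ∈ M` receives an arc from outside `M`. -/
def IsEntrance (δ : Q → E → Option Q) (M : Set Q) (u : Q) : Prop :=
  u ∈ M ∧ ∃ x : E, ∃ v : Q, v ∉ M ∧ δ v x = some u

/-- `v` is an `x`-exit of `M`. -/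
def IsExit (δ : Q → E → Option Q) (M : Set Q) (x : E) (v : Q) : Prop :=
  v ∉ M ∧ ∃ u ∈ M, δ u x = some v

/-- `M` is a module of the FSM `(Q, E, δ, s)`. -/
def IsFsmModule (δ : Q → E → Option Q) (s : Q) (M : Set Q) : Prop :=
  M.Nonempty ∧
  (∀ u v : Q, IsEntrance δ M u → IsEntrance δ M v → u = v) ∧
  (s ∈ M → ∀ u : Q, IsEntrance δ M u → u = s) ∧
  ∀ x : E, (∃ v, IsExit δ M x v) →
    ((∀ v w : Q, IsExit δ M x v → IsExit δ M x w → v = w) ∧ ∀ u ∈ M, (δ u x).isSome)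

/-- `M` contains an `x`-cycle. -/
def HasXCycleIn (δ : Q → E → Option Q) (x : E) (M : Set Q) : Prop :=
  ∃ q ∈ M, Relation.TransGen (fun a b => a ∈ M ∧ δ a x = some b) q q

/-- `M` is a thin module. -/
def IsThinModule (δ : Q → E → Option Q) (s : Q) (M : Set Q) : Prop :=
  IsFsmModule δ s M ∧ ∀ x : E, (¬ ∃ v, IsExit δ M x v) ∨ ¬ HasXCycleIn δ x M

/-- One transition step of the FSM, as a digraph arc. -/
def FsmStep (δ : Q → E → Option Q) (u v : Q) : Prop := ∃ x : E, δ u x = some v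

/-- Reachability by a directed path. -/
def Reaches (δ : Q → E → Option Q) : Q → Q → Prop := Relation.ReflTransGen (FsmStep δ)

/-- Every state is reachable from the start state. -/
def Accessible (δ : Q → E → Option Q) (s : Q) : Prop := ∀ q : Q, Reaches δ s q

/-- `σ` is the start node of the module `M`. -/
def IsStartNode (δ : Q → E → Option Q) (s : Q) (M : Set Q) (σ : Q) : Prop :=
  (s ∈ M ∧ σ = s) ∨ (s ∉ M ∧ IsEntrance δ M σ)

/-- Two sets overlap. -/
def Overlap {α : Type*} (X Y : Set α) : Prop :=
  (X ∩ Y).Nonempty ∧ ¬ X ⊆ Y ∧ ¬ Y ⊆ X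

/-- A collection of sets is overlapping: across every partition into two
nonempty blocks there is an overlapping pair. -/
def OverlapColl {α : Type*} (S : Set (Set α)) : Prop :=
  ∀ T ⊆ S, T.Nonempty → (S \ T).Nonempty → ∃ a ∈ T, ∃ b ∈ S \ T, Overlap a b

/-- `M` is decomposable with respect to the family `F`. -/
def Decomposable {α : Type*} (F : Set (Set α)) (M : Set α) : Prop :=
  ∃ S : Set (Set α), S ⊆ F ∧ OverlapColl S ∧ ⋃₀ S = M ∧ ∃ a ∈ S, ∃ b ∈ S, a ≠ b

/-- `M` is an indecomposable member of the family `F`. -/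
def Indecomposable {α : Type*} (F : Set (Set α)) (M : Set α) : Prop :=
  M ∈ F ∧ ¬ Decomposable F M

/-- `M` is an indecomposable thin module of the FSM. -/
def IndecompThin (δ : Q → E → Option Q) (s : Q) (M : Set Q) : Prop :=
  Indecomposable {N : Set Q | IsThinModule δ s N} M

/-!
An accessible FSM enters a module `M` only at its start node `σ_M`, and `σ_M = s` when `s ∈ M`.
For intersecting modules `X` and `Y`, a path from `s` into `X ∩ Y` last enters `X ∩ Y` at `s` or
at an entrance of `X` or of `Y`, so `σ_X ∈ Y` or `σ_Y ∈ X`; in the second case `X ∪ Y` is entered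
only at `σ_X`.

If `v` is an `x`-exit of a thin module `X`, then, the state space being finite and `X` free of
`x`-cycles, every `x`-run from `X` stays in `X` until it reaches `v`. When `v ∉ Y`, the `x`-run
from a node of `X ∩ Y` leaves `Y` through the `x`-exit of `Y`, so every `x`-run from `X ∪ Y`
ends at `v`: it is the only `x`-exit of `X ∪ Y`, which has no `x`-cycle. Since the collection is overlapping, its members can be
added one at a time, each meeting the union of those already added.
-/

open Set Relation

theorem Relation.TransGen.self_of_reflTransGen {α : Type*} {r : α → α → Prop}
    (hr : ∀ {a b c}, r a b → r a c → b = c) {q v : α} (hq : TransGen r q q)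
    (hqv : ReflTransGen r q v) : TransGen r v v := by
  induction hqv with
  | refl => exact hq
  | tail _ hbc ih =>
    obtain ⟨d, hbd, hdb⟩ := TransGen.head'_iff.mp ih
    obtain rfl := hr hbc hbd
    exact .tail' hdb hbc

variable {δ : Q → E → Option Q} {s : Q} {x : E} {M N X Y : Set Q} {a b c e u v w σ γ : Q}

theorem IsEntrance.of_subset (he : IsEntrance δ M e) (hNM : N ⊆ M) (heN : e ∈ N) :
    IsEntrance δ N e :=
  let ⟨_, x, t, htM, ht⟩ := he
  ⟨heN, x, t, fun htN => htM (hNM htN), ht⟩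

theorem IsStartNode.mem (h : IsStartNode δ s M σ) : σ ∈ M := by
  rcases h with ⟨hs, rfl⟩ | ⟨-, he⟩
  exacts [hs, he.1]

theorem IsStartNode.of_subset (h : IsStartNode δ s M σ) (hNM : N ⊆ M) (hσ : σ ∈ N) :
    IsStartNode δ s N σ := by
  rcases h with ⟨-, rfl⟩ | ⟨hs, he⟩
  · exact .inl ⟨hσ, rfl⟩
  · exact .inr ⟨fun hsN => hs (hNM hsN), he.of_subset hNM hσ⟩

theorem exists_isEntrance_of_reaches (h : Reaches δ a b) (ha : a ∉ M) (hb : b ∈ M) :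
    ∃ e, IsEntrance δ M e := by
  induction h with
  | refl => exact absurd hb ha
  | @tail c b _ hcb ih =>
    by_cases hc : c ∈ M
    · exact ih hc
    · obtain ⟨x, hx⟩ := hcb
      exact ⟨b, hb, x, c, hc, hx⟩

theorem Set.Nonempty.exists_isStartNode (hM : M.Nonempty) (hacc : Accessible δ s) :
    ∃ σ, IsStartNode δ s M σ := by
  by_cases hs : s ∈ M
  · exact ⟨s, .inl ⟨hs, rfl⟩⟩
  · obtain ⟨m, hm⟩ := hM
    obtain ⟨e, he⟩ := exists_isEntrance_of_reaches (hacc m) hs hm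
    exact ⟨e, .inr ⟨hs, he⟩⟩

def EntersOnlyAt (δ : Q → E → Option Q) (s : Q) (M : Set Q) (σ : Q) : Prop :=
  (s ∈ M → σ = s) ∧ ∀ e, IsEntrance δ M e → e = σ

theorem IsFsmModule.entersOnlyAt (hM : IsFsmModule δ s M) (hσ : IsStartNode δ s M σ) :
    EntersOnlyAt δ s M σ := by
  rcases hσ with ⟨hs, rfl⟩ | ⟨hs, hσ⟩
  · exact ⟨fun _ => rfl, hM.2.2.1 hs⟩
  · exact ⟨fun h => absurd h hs, fun e he => hM.2.1 e σ he hσ⟩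

theorem EntersOnlyAt.eq_of_isStartNode (h : EntersOnlyAt δ s M σ) (hγ : IsStartNode δ s M γ) :
    γ = σ := by
  rcases hγ with ⟨hs, rfl⟩ | ⟨-, he⟩
  exacts [(h.1 hs).symm, h.2 γ he]

theorem EntersOnlyAt.isStartNode (h : EntersOnlyAt δ s M σ) (hacc : Accessible δ s)
    (hσ : σ ∈ M) : IsStartNode δ s M σ := by
  by_cases hs : s ∈ M
  · exact .inl ⟨hs, h.1 hs⟩
  · obtain ⟨e, he⟩ := exists_isEntrance_of_reaches (hacc σ) hs hσ
    exact .inr ⟨hs, h.2 e he ▸ he⟩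

theorem EntersOnlyAt.mem_or_mem {σX σY : Q} (hacc : Accessible δ s)
    (hX : EntersOnlyAt δ s X σX) (hY : EntersOnlyAt δ s Y σY) (hXY : (X ∩ Y).Nonempty) :
    σX ∈ Y ∨ σY ∈ X := by
  obtain ⟨c, hcX, hcY⟩ := hXY
  induction hacc c with
  | refl => exact .inl (hX.1 hcX ▸ hcY)
  | @tail b c _ hbc ih =>
    obtain ⟨x, hx⟩ := hbc
    by_cases hbX : b ∈ X
    · by_cases hbY : b ∈ Y
      · exact ih hbX hbY
      · exact .inr (hY.2 c ⟨hcY, x, b, hbY, hx⟩ ▸ hcX)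
    · exact .inl (hX.2 c ⟨hcX, x, b, hbX, hx⟩ ▸ hcY)

theorem EntersOnlyAt.union_of_mem {σX σY : Q} (hX : EntersOnlyAt δ s X σX)
    (hY : EntersOnlyAt δ s Y σY) (hYX : σY ∈ X) : EntersOnlyAt δ s (X ∪ Y) σX := by
  refine ⟨fun hs => hs.elim hX.1 fun hsY => hX.1 (hY.1 hsY ▸ hYX), fun e he => ?_⟩
  have heX : e ∈ X := he.1.elim id fun heY => hY.2 e (he.of_subset subset_union_right heY) ▸ hYX
  exact hX.2 e (he.of_subset subset_union_left heX)

theorem IsFsmModule.exists_entersOnlyAt_union (hacc : Accessible δ s) (hX : IsFsmModule δ s X)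
    (hY : IsFsmModule δ s Y) (hXY : (X ∩ Y).Nonempty) :
    ∃ σ ∈ X ∪ Y, EntersOnlyAt δ s (X ∪ Y) σ ∧
      ∀ γ ∈ X ∪ Y, (γ ∈ X → IsStartNode δ s X γ) → (γ ∈ Y → IsStartNode δ s Y γ) → γ = σ := by
  obtain ⟨σX, hσX⟩ := hX.1.exists_isStartNode hacc
  obtain ⟨σY, hσY⟩ := hY.1.exists_isStartNode hacc
  wlog hYX : σY ∈ X generalizing X Y σX σY
  · have hXY' := (hX.entersOnlyAt hσX).mem_or_mem hacc (hY.entersOnlyAt hσY) hXY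
    obtain ⟨σ, hσ, hU, hγ⟩ := this hY hX (inter_comm X Y ▸ hXY) σY hσY σX hσX
      (hXY'.resolve_right hYX)
    rw [union_comm]
    exact ⟨σ, hσ, hU, fun γ h hγX hγY => hγ γ h hγY hγX⟩
  have hX' := hX.entersOnlyAt hσX
  have hY' := hY.entersOnlyAt hσY
  refine ⟨σX, .inl hσX.mem, hX'.union_of_mem hY' hYX, fun γ hγ hγX hγY => ?_⟩
  have hγX' : γ ∈ X := hγ.elim id fun h => hY'.eq_of_isStartNode (hγY h) ▸ hYX
  exact hX'.eq_of_isStartNode (hγX hγX')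

theorem isStartNode_union (hacc : Accessible δ s) (hX : IsFsmModule δ s X)
    (hY : IsFsmModule δ s Y) (hXY : (X ∩ Y).Nonempty) (hγ : γ ∈ X ∪ Y)
    (hγX : γ ∈ X → IsStartNode δ s X γ) (hγY : γ ∈ Y → IsStartNode δ s Y γ) :
    IsStartNode δ s (X ∪ Y) γ := by
  obtain ⟨σ, hσ, hU, hγσ⟩ := hX.exists_entersOnlyAt_union hacc hY hXY
  rw [hγσ γ hγ hγX hγY]
  exact hU.isStartNode hacc hσ

/-- `HasXCycleIn δ x M` asks for a cycle of these arcs. -/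
def XStep (δ : Q → E → Option Q) (x : E) (M : Set Q) (a b : Q) : Prop :=
  a ∈ M ∧ δ a x = some b

def DrainsTo (δ : Q → E → Option Q) (x : E) (M : Set Q) (v : Q) : Prop :=
  ∀ u ∈ M, TransGen (XStep δ x M) u v

theorem XStep.eq {M' : Set Q} (hb : XStep δ x M a b) (hc : XStep δ x M' a c) : b = c :=
  Option.some_inj.mp (hb.2.symm.trans hc.2)

theorem XStep.mono (hMN : M ⊆ N) : XStep δ x M ≤ XStep δ x N :=
  fun _ _ h => ⟨hMN h.1, h.2⟩

theorem mem_of_transGen_xStep (h : TransGen (XStep δ x M) a b) : a ∈ M :=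
  (TransGen.head'_iff.mp h).choose_spec.1.1

theorem exists_isExit_of_transGen_xStep (h : TransGen (XStep δ x M) c v) (hc : c ∈ Y)
    (hv : v ∉ Y) : ∃ w, IsExit δ Y x w ∧ ReflTransGen (XStep δ x M) w v := by
  induction h using TransGen.head_induction_on with
  | single hcv => exact ⟨v, ⟨hv, _, hc, hcv.2⟩, .refl⟩
  | @head c b hcb hbv ih =>
    by_cases hb : b ∈ Y
    · exact ih hb
    · exact ⟨b, ⟨hb, c, hc, hcb.2⟩, hbv.to_reflTransGen⟩

theorem DrainsTo.isSome (h : DrainsTo δ x M v) (hu : u ∈ M) : (δ u x).isSome :=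
  let ⟨_, hub, _⟩ := TransGen.head'_iff.mp (h u hu)
  Option.isSome_iff_exists.mpr ⟨_, hub.2⟩

theorem DrainsTo.eq_of_isExit (h : DrainsTo δ x M v) (hw : IsExit δ M x w) : w = v := by
  obtain ⟨hwM, a, ha, haw⟩ := hw
  obtain ⟨b, hab, hbv⟩ := TransGen.head'_iff.mp (h a ha)
  obtain rfl : w = b := XStep.eq (M := M) ⟨ha, haw⟩ hab
  rcases hbv.cases_head with hwv | ⟨_, hw, -⟩
  exacts [hwv, absurd hw.1 hwM]

theorem DrainsTo.not_hasXCycleIn (h : DrainsTo δ x M v) (hv : v ∉ M) : ¬ HasXCycleIn δ x M :=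
  fun ⟨q, hq, (hqq : TransGen (XStep δ x M) q q)⟩ =>
    hv <| mem_of_transGen_xStep <|
      hqq.self_of_reflTransGen (fun h₁ h₂ => h₁.eq h₂) (h q hq).to_reflTransGen

theorem DrainsTo.union (hX : DrainsTo δ x X v) (hY : DrainsTo δ x Y w)
    (hwv : ReflTransGen (XStep δ x X) w v) : DrainsTo δ x (X ∪ Y) v := by
  rintro u (hu | hu)
  · exact TransGen.mono (XStep.mono subset_union_left) _ _ (hX u hu)
  · exact (TransGen.mono (XStep.mono subset_union_right) _ _ (hY u hu)).trans_left
      (ReflTransGen.mono (XStep.mono subset_union_left) _ _ hwv)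

theorem IsThinModule.drainsTo [Finite Q] (hX : IsThinModule δ s X) (hv : IsExit δ X x v) :
    DrainsTo δ x X v := by
  have hex : ∃ w, IsExit δ X x w := ⟨v, hv⟩
  obtain ⟨huniq, htot⟩ := hX.1.2.2.2 x hex
  have hnc : ¬ HasXCycleIn δ x X := (hX.2 x).resolve_left (not_not_intro hex)
  let before : Q → Q → Prop := fun a b => TransGen (XStep δ x X) b a
  have : IsTrans Q before := ⟨fun _ _ _ h₁ h₂ => h₂.trans h₁⟩
  have : Std.Irrefl before := ⟨fun a h => hnc ⟨a, mem_of_transGen_xStep h, h⟩⟩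
  intro u
  induction u using (Finite.wellFounded_of_trans_of_irrefl before).induction with
  | _ u ih =>
    intro hu
    obtain ⟨u', hu'⟩ := Option.isSome_iff_exists.mp (htot u hu)
    by_cases h' : u' ∈ X
    · exact (ih u' (.single ⟨hu, hu'⟩) h').head ⟨hu, hu'⟩
    · exact huniq u' v ⟨h', u, hu, hu'⟩ hv ▸ .single ⟨hu, hu'⟩

theorem IsThinModule.drainsTo_union_of_isExit [Finite Q] (hX : IsThinModule δ s X)
    (hY : IsThinModule δ s Y) (hXY : (X ∩ Y).Nonempty) (hv : IsExit δ X x v) (hvY : v ∉ Y) :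
    DrainsTo δ x (X ∪ Y) v := by
  obtain ⟨c, hcX, hcY⟩ := hXY
  have hXv := hX.drainsTo hv
  obtain ⟨w, hw, hwv⟩ := exists_isExit_of_transGen_xStep (hXv c hcX) hcY hvY
  exact hXv.union (hY.drainsTo hw) hwv

theorem IsThinModule.drainsTo_union [Finite Q] (hX : IsThinModule δ s X)
    (hY : IsThinModule δ s Y) (hXY : (X ∩ Y).Nonempty) (hv : IsExit δ (X ∪ Y) x v) :
    DrainsTo δ x (X ∪ Y) v := by
  obtain ⟨hvXY, u, hu | hu, hux⟩ := hv
  · exact hX.drainsTo_union_of_isExit hY hXY ⟨fun h => hvXY (.inl h), u, hu, hux⟩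
      fun h => hvXY (.inr h)
  · rw [union_comm]
    exact hY.drainsTo_union_of_isExit hX (inter_comm X Y ▸ hXY)
      ⟨fun h => hvXY (.inr h), u, hu, hux⟩ fun h => hvXY (.inl h)

theorem IsThinModule.of_drainsTo (hne : M.Nonempty) (hσ : EntersOnlyAt δ s M σ)
    (hexit : ∀ x v, IsExit δ M x v → DrainsTo δ x M v) : IsThinModule δ s M := by
  refine ⟨⟨hne, fun u v hu hv => (hσ.2 u hu).trans (hσ.2 v hv).symm,
    fun hs u hu => (hσ.2 u hu).trans (hσ.1 hs), fun x ⟨v, hv⟩ => ⟨fun w₁ w₂ h₁ h₂ =>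
      ((hexit x v hv).eq_of_isExit h₁).trans ((hexit x v hv).eq_of_isExit h₂).symm,
      fun u hu => (hexit x v hv).isSome hu⟩⟩, fun x => ?_⟩
  by_cases hex : ∃ v, IsExit δ M x v
  · obtain ⟨v, hv⟩ := hex
    exact .inr ((hexit x v hv).not_hasXCycleIn hv.1)
  · exact .inl hex

theorem IsThinModule.union [Finite Q] (hacc : Accessible δ s) (hX : IsThinModule δ s X)
    (hY : IsThinModule δ s Y) (hXY : (X ∩ Y).Nonempty) : IsThinModule δ s (X ∪ Y) := by
  obtain ⟨σ, -, hσ, -⟩ := hX.1.exists_entersOnlyAt_union hacc hY.1 hXY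
  exact .of_drainsTo (hX.1.1.mono subset_union_left) hσ fun _ _ => hX.drainsTo_union hY hXY

theorem OverlapColl.induction {α : Type*} {p : Set (Set α) → Prop} {S : Finset (Set α)}
    (hov : OverlapColl (↑S : Set (Set α))) (hS : S.Nonempty) (hsingleton : ∀ A ∈ S, p {A})
    (hinsert : ∀ A ∈ S, ∀ T : Set (Set α), (A ∩ ⋃₀ T).Nonempty → p T → p (insert A T)) :
    p ↑S := by
  obtain ⟨A, hA⟩ := hS
  suffices h : ∀ T : Finset (Set α), T.card ≤ S.card → T ⊆ S → T.Nonempty → p ↑T → p ↑S from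
    h {A} (Finset.card_le_card (Finset.singleton_subset_iff.2 hA))
      (Finset.singleton_subset_iff.2 hA) (Finset.singleton_nonempty A)
      (by simpa using hsingleton A hA)
  refine Finset.strongDownwardInduction fun T ih _ hTS hT hpT => ?_
  obtain rfl | hTS' := hTS.eq_or_ssubset
  · exact hpT
  obtain ⟨D, hDS, hDT⟩ := Finset.exists_of_ssubset hTS'
  obtain ⟨C, hCT, B, ⟨hBS, hBT⟩, ⟨q, hqC, hqB⟩, -⟩ := hov ↑T (Finset.coe_subset.2 hTS)
    (Finset.coe_nonempty.2 hT) ⟨D, hDS, hDT⟩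
  have hBTS : insert B T ⊆ S := Finset.insert_subset hBS hTS
  refine ih (Finset.card_le_card hBTS) (Finset.ssubset_insert hBT) hBTS
    (Finset.insert_nonempty B T) ?_
  rw [Finset.coe_insert]
  exact hinsert B hBS ↑T ⟨q, hqB, C, hCT, hqC⟩ hpT

def IsCommonStartNode (δ : Q → E → Option Q) (s : Q) (S : Set (Set Q)) (γ : Q) : Prop :=
  γ ∈ ⋃₀ S ∧ ∀ A ∈ S, γ ∈ A → IsStartNode δ s A γ

theorem IsStartNode.isCommonStartNode {S : Set (Set Q)} (h : IsStartNode δ s (⋃₀ S) σ) :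
    IsCommonStartNode δ s S σ :=
  ⟨h.mem, fun _ hA hσA => h.of_subset (subset_sUnion_of_mem hA) hσA⟩

theorem isStartNode_sUnion_insert {A : Set Q} {T : Set (Set Q)} (hacc : Accessible δ s)
    (hA : IsFsmModule δ s A) (hT : IsFsmModule δ s (⋃₀ T)) (hAT : (A ∩ ⋃₀ T).Nonempty)
    (hstart : ∀ γ, IsCommonStartNode δ s T γ → IsStartNode δ s (⋃₀ T) γ)
    (hγ : IsCommonStartNode δ s (insert A T) γ) : IsStartNode δ s (⋃₀ insert A T) γ := by
  rw [sUnion_insert]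
  exact isStartNode_union hacc hA hT hAT (sUnion_insert A T ▸ hγ.1) (hγ.2 A (mem_insert A T))
    fun h => hstart γ ⟨h, fun C hC => hγ.2 C (mem_insert_of_mem A hC)⟩

/-- Let `Z` be an accessible FSM and `S = {A_1, …, A_n}` (`n ≥ 1`)
an overlapping collection of thin modules of `Z`, with `H = ⋃₀ S`. Then `H` is a
thin module of `Z`, there is exactly one node `α ∈ H` which is the start node of
every member of `S` containing it, and this `α` is the start node of `H`. -/
theorem stmt9 [Fintype Q] (δ : Q → E → Option Q) (s : Q) (hacc : Accessible δ s)
    (S : Finset (Set Q)) (hS : S.Nonempty)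
    (hthin : ∀ A ∈ S, IsThinModule δ s A)
    (hov : OverlapColl (↑S : Set (Set Q))) :
    IsThinModule δ s (⋃₀ (↑S : Set (Set Q))) ∧
    (∃! α : Q, α ∈ ⋃₀ (↑S : Set (Set Q)) ∧ ∀ A ∈ S, α ∈ A → IsStartNode δ s A α) ∧
    (∀ α : Q, (α ∈ ⋃₀ (↑S : Set (Set Q)) ∧ ∀ A ∈ S, α ∈ A → IsStartNode δ s A α) →
      IsStartNode δ s (⋃₀ (↑S : Set (Set Q))) α) := by
  obtain ⟨hH, hstart⟩ : IsThinModule δ s (⋃₀ ↑S) ∧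
      ∀ γ, IsCommonStartNode δ s ↑S γ → IsStartNode δ s (⋃₀ ↑S) γ := by
    refine hov.induction (p := fun T => IsThinModule δ s (⋃₀ T) ∧
      ∀ γ, IsCommonStartNode δ s T γ → IsStartNode δ s (⋃₀ T) γ) hS
      (fun A hA => ?_) fun A hA T hAT hT => ?_
    · rw [sUnion_singleton]
      exact ⟨hthin A hA, fun γ hγ => hγ.2 A rfl (by simpa using hγ.1)⟩
    · refine ⟨?_, fun γ => isStartNode_sUnion_insert hacc (hthin A hA).1 hT.1.1 hAT hT.2⟩
      rw [sUnion_insert]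
      exact (hthin A hA).union hacc hT.1 hAT
  obtain ⟨σ, hσ⟩ := hH.1.1.exists_isStartNode hacc
  exact ⟨hH, ⟨σ, hσ.isCommonStartNode, fun γ hγ =>
    (hH.1.entersOnlyAt hσ).eq_of_isStartNode (hstart γ hγ)⟩, hstart⟩
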